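/- With the same setup (Φ₀ ~ N(0,1), Ξ₀² ~ χ²(N) independent, Φ₁ conditionally normal with mean e^{-η²ξ₀²/2}(φ₀ - ηξ₀²) and variance 1 - e^{-η²ξ₀²}(1+η²ξ₀²)), the variance of Φ₁ equals 1 + Nη²(1+2η²)^{-N/2-2}(N + 1 - 2η²) - N²η²(η²+1)^{-N-2}. -/

import Mathlib

/-!
Conditionally on `Φ₀ = φ₀`, both inner integrals are combinations of the moments
`E[Ξ^k e^{-sΞ}] = Γ(N/2 + k) / Γ(N/2) · 2^k (1 + 2s)^{-N/2-k}` of `Ξ ~ χ²(N)` (Gamma integrals),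
hence quadratic polynomials in `φ₀`. Integrating those against the standard normal density only
uses `E Φ₀ = 0` and `E Φ₀² = 1`; the rest is algebra with powers of `1 + 2η²` and `1 + η²`.
-/

open Real Set

/-- Chi-squared density with `N` degrees of freedom. -/
noncomputable def chiSqPDF (N : ℕ) (z : ℝ) : ℝ :=
  z ^ ((N : ℝ) / 2 - 1) * Real.exp (-z / 2) / (2 ^ ((N : ℝ) / 2) * Real.Gamma ((N : ℝ) / 2))

/-- Standard normal density. -/
noncomputable def stdNormalPDF (x : ℝ) : ℝ :=
  (2 * π) ^ (-(1 / 2 : ℝ)) * Real.exp (-x ^ 2 / 2)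

/-- Conditional mean of `Φ₁` given `Φ₀ = φ₀` and `Ξ₀² = ξ`. -/
noncomputable def condMean (η φ₀ ξ : ℝ) : ℝ :=
  Real.exp (-η ^ 2 * ξ / 2) * (φ₀ - η * ξ)

/-- Conditional variance of `Φ₁` given `Ξ₀² = ξ`. -/
noncomputable def condVar (η ξ : ℝ) : ℝ :=
  1 - Real.exp (-η ^ 2 * ξ) * (1 + η ^ 2 * ξ)

open MeasureTheory

section StandardNormal

open ProbabilityTheory

lemma stdNormalPDF_eq_gaussianPDFReal : stdNormalPDF = gaussianPDFReal 0 1 := by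
  ext x
  rw [stdNormalPDF, gaussianPDFReal, NNReal.coe_one, mul_one, mul_one, sub_zero,
    Real.sqrt_eq_rpow, Real.rpow_neg (by positivity)]

lemma integral_stdNormalPDF_mul (f : ℝ → ℝ) :
    ∫ x, stdNormalPDF x * f x = ∫ x, f x ∂gaussianReal 0 1 := by
  rw [integral_gaussianReal_eq_integral_smul one_ne_zero, stdNormalPDF_eq_gaussianPDFReal]
  rfl

lemma integral_sq_gaussianReal_zero (v : NNReal) : ∫ x, x ^ 2 ∂gaussianReal 0 v = v := by
  rw [← variance_id_gaussianReal (μ := 0), variance_eq_integral measurable_id.aemeasurable]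
  simp only [id, integral_id_gaussianReal, sub_zero]

lemma integral_stdNormalPDF_mul_quadratic (a b c : ℝ) :
    ∫ x, stdNormalPDF x * (a + b * x + c * x ^ 2) = a + c := by
  have h1 : Integrable (fun x : ℝ => x) (gaussianReal 0 1) :=
    memLp_one_iff_integrable.mp (memLp_id_gaussianReal 1)
  have h2 : Integrable (fun x : ℝ => x ^ 2) (gaussianReal 0 1) :=
    (memLp_id_gaussianReal 2).integrable_sq
  rw [integral_stdNormalPDF_mul,
    integral_add (f := fun x => a + b * x) ((integrable_const a).add (h1.const_mul b))
      (h2.const_mul c), integral_add (integrable_const a) (h1.const_mul b),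
    integral_const_mul, integral_const_mul, integral_id_gaussianReal,
    integral_sq_gaussianReal_zero]
  simp

lemma integral_stdNormalPDF_mul_affine (a b : ℝ) :
    ∫ x, stdNormalPDF x * (a + b * x) = a := by
  simpa using integral_stdNormalPDF_mul_quadratic a b 0

end StandardNormal

section ChiSquared

variable {N : ℕ} {s : ℝ}

lemma pow_mul_exp_mul_chiSqPDF_eq (N k : ℕ) (s : ℝ) {ξ : ℝ} (hξ : 0 < ξ) :
    ξ ^ k * exp (-s * ξ) * chiSqPDF N ξ =
      (2 ^ ((N : ℝ) / 2) * Gamma ((N : ℝ) / 2))⁻¹ *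
        (ξ ^ ((N : ℝ) / 2 + k - 1) * exp (-((s + 1 / 2) * ξ))) := by
  rw [chiSqPDF, show (N : ℝ) / 2 + k - 1 = k + ((N : ℝ) / 2 - 1) by ring, rpow_add hξ,
    rpow_natCast, show -((s + 1 / 2) * ξ) = -s * ξ + -ξ / 2 by ring, exp_add]
  field_simp

lemma integrableOn_pow_mul_exp_mul_chiSqPDF (hN : 0 < N) (k : ℕ) (hs : 0 < 1 + 2 * s) :
    IntegrableOn (fun ξ => ξ ^ k * exp (-s * ξ) * chiSqPDF N ξ) (Ioi 0) := by
  have hN2 : (0 : ℝ) < N / 2 + k := by positivity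
  have hint : IntegrableOn (fun ξ : ℝ => ξ ^ ((N : ℝ) / 2 + k - 1) * exp (-((s + 1 / 2) * ξ)))
      (Ioi 0) := by
    simpa only [rpow_one, neg_mul] using integrableOn_rpow_mul_exp_neg_mul_rpow
      (p := 1) (s := (N : ℝ) / 2 + k - 1) (by linarith [hN2]) one_pos (by linarith)
  exact IntegrableOn.congr_fun (hint.const_mul _)
    (fun ξ hξ => (pow_mul_exp_mul_chiSqPDF_eq N k s hξ).symm) measurableSet_Ioi

lemma integral_pow_mul_exp_mul_chiSqPDF (hN : 0 < N) (k : ℕ) (hs : 0 < 1 + 2 * s) :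
    ∫ ξ in Ioi 0, ξ ^ k * exp (-s * ξ) * chiSqPDF N ξ =
      Gamma ((N : ℝ) / 2 + k) / Gamma ((N : ℝ) / 2) * 2 ^ k
        * (1 + 2 * s) ^ (-(N : ℝ) / 2 - k) := by
  have hN2 : (0 : ℝ) < (N : ℝ) / 2 := by positivity
  rw [setIntegral_congr_fun measurableSet_Ioi (fun ξ hξ => pow_mul_exp_mul_chiSqPDF_eq N k s hξ),
    integral_const_mul, integral_rpow_mul_exp_neg_mul_Ioi (by positivity) (by linarith),
    show 1 / (s + 1 / 2) = 2 * (1 + 2 * s)⁻¹ by field_simp; ring,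
    mul_rpow two_pos.le (by positivity),
    rpow_add two_pos, rpow_natCast, inv_rpow hs.le, ← rpow_neg hs.le, neg_add']
  have := (Gamma_pos_of_pos hN2).ne'
  field_simp

lemma integrableOn_quadratic_mul_exp_mul_chiSqPDF (hN : 0 < N) (hs : 0 < 1 + 2 * s)
    (a b c : ℝ) :
    IntegrableOn (fun ξ => (a + b * ξ + c * ξ ^ 2) * exp (-s * ξ) * chiSqPDF N ξ) (Ioi 0) := by
  have hmom k := integrableOn_pow_mul_exp_mul_chiSqPDF hN k hs
  exact IntegrableOn.congr_fun (((hmom 0).const_mul a).add ((hmom 1).const_mul b) |>.add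
    ((hmom 2).const_mul c)) (fun ξ _ => by simp only [Pi.add_apply]; ring) measurableSet_Ioi

lemma integral_quadratic_mul_exp_mul_chiSqPDF (hN : 0 < N) (hs : 0 < 1 + 2 * s) (a b c : ℝ) :
    ∫ ξ in Ioi 0, (a + b * ξ + c * ξ ^ 2) * exp (-s * ξ) * chiSqPDF N ξ =
      (1 + 2 * s) ^ (-(N : ℝ) / 2) * a + N * (1 + 2 * s) ^ (-(N : ℝ) / 2 - 1) * b
        + N * (N + 2) * (1 + 2 * s) ^ (-(N : ℝ) / 2 - 2) * c := by
  have hN2 : (N : ℝ) / 2 ≠ 0 := by positivity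
  have hmom k := integrableOn_pow_mul_exp_mul_chiSqPDF hN k hs
  have hsplit : ∀ ξ, (a + b * ξ + c * ξ ^ 2) * exp (-s * ξ) * chiSqPDF N ξ =
      a * (ξ ^ 0 * exp (-s * ξ) * chiSqPDF N ξ) + b * (ξ ^ 1 * exp (-s * ξ) * chiSqPDF N ξ)
        + c * (ξ ^ 2 * exp (-s * ξ) * chiSqPDF N ξ) := fun ξ => by ring
  simp_rw [hsplit]
  rw [integral_add (f := fun ξ => a * (ξ ^ 0 * exp (-s * ξ) * chiSqPDF N ξ)
      + b * (ξ ^ 1 * exp (-s * ξ) * chiSqPDF N ξ))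
      (((hmom 0).const_mul a).add ((hmom 1).const_mul b)) ((hmom 2).const_mul c),
    integral_add ((hmom 0).const_mul a) ((hmom 1).const_mul b),
    integral_const_mul, integral_const_mul, integral_const_mul,
    integral_pow_mul_exp_mul_chiSqPDF hN 0 hs,
    integral_pow_mul_exp_mul_chiSqPDF hN 1 hs, integral_pow_mul_exp_mul_chiSqPDF hN 2 hs]
  push_cast
  rw [add_zero, sub_zero, div_self (Gamma_pos_of_pos (by positivity)).ne', Gamma_add_one hN2,
    show (N : ℝ) / 2 + 2 = (N / 2 + 1) + 1 by ring, Gamma_add_one (by positivity),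
    Gamma_add_one hN2]
  have := (Gamma_pos_of_pos (by positivity : (0 : ℝ) < N / 2)).ne'
  field_simp

lemma integrableOn_chiSqPDF (hN : 0 < N) : IntegrableOn (chiSqPDF N) (Ioi 0) := by
  simpa using integrableOn_pow_mul_exp_mul_chiSqPDF hN 0 (s := 0) (by norm_num)

lemma integral_chiSqPDF (hN : 0 < N) : ∫ ξ in Ioi 0, chiSqPDF N ξ = 1 := by
  simpa [div_self (Gamma_pos_of_pos (by positivity : (0 : ℝ) < N / 2)).ne'] using
    integral_pow_mul_exp_mul_chiSqPDF hN 0 (s := 0) (by norm_num)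

end ChiSquared

section ConditionalMoments

variable {N : ℕ}

lemma integral_condMean_mul_chiSqPDF (hN : 0 < N) (η φ₀ : ℝ) :
    ∫ ξ in Ioi 0, condMean η φ₀ ξ * chiSqPDF N ξ =
      -(N * η * (η ^ 2 + 1) ^ (-(N : ℝ) / 2 - 1)) + (η ^ 2 + 1) ^ (-(N : ℝ) / 2) * φ₀ := by
  have h := integral_quadratic_mul_exp_mul_chiSqPDF hN (s := η ^ 2 / 2) (by positivity) φ₀ (-η) 0
  have hsplit : ∀ ξ, condMean η φ₀ ξ * chiSqPDF N ξ =
      (φ₀ + -η * ξ + 0 * ξ ^ 2) * exp (-(η ^ 2 / 2) * ξ) * chiSqPDF N ξ := fun ξ => by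
    rw [condMean]; ring_nf
  rw [show 1 + 2 * (η ^ 2 / 2) = η ^ 2 + 1 by ring] at h
  simp_rw [hsplit, h]
  ring

lemma integral_condVar_add_condMean_sq_mul_chiSqPDF (hN : 0 < N) (η φ₀ : ℝ) :
    ∫ ξ in Ioi 0, (condVar η ξ + condMean η φ₀ ξ ^ 2) * chiSqPDF N ξ =
      (1 - (1 + 2 * η ^ 2) ^ (-(N : ℝ) / 2) - η ^ 2 * N * (1 + 2 * η ^ 2) ^ (-(N : ℝ) / 2 - 1)
          + η ^ 2 * N * (N + 2) * (1 + 2 * η ^ 2) ^ (-(N : ℝ) / 2 - 2))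
        + -(2 * η * N * (1 + 2 * η ^ 2) ^ (-(N : ℝ) / 2 - 1)) * φ₀
        + (1 + 2 * η ^ 2) ^ (-(N : ℝ) / 2) * φ₀ ^ 2 := by
  have h := integral_quadratic_mul_exp_mul_chiSqPDF hN (s := η ^ 2) (by positivity)
    (φ₀ ^ 2 - 1) (-η ^ 2 - 2 * η * φ₀) (η ^ 2)
  have hsplit : ∀ ξ, (condVar η ξ + condMean η φ₀ ξ ^ 2) * chiSqPDF N ξ = chiSqPDF N ξ +
      (φ₀ ^ 2 - 1 + (-η ^ 2 - 2 * η * φ₀) * ξ + η ^ 2 * ξ ^ 2) * exp (-η ^ 2 * ξ)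
        * chiSqPDF N ξ := fun ξ => by
    rw [condVar, condMean, mul_pow, ← exp_nat_mul]
    ring_nf
  simp_rw [hsplit]
  rw [integral_add (integrableOn_chiSqPDF hN)
    (integrableOn_quadratic_mul_exp_mul_chiSqPDF hN (by positivity) _ _ _), integral_chiSqPDF hN, h]
  ring

end ConditionalMoments

/-- `Var Φ₁` is encoded by the law of total variance as
`E[condVar + condMean²] - E[condMean]²` against the joint density of `(Φ₀, Ξ₀²)`. -/
theorem variance_field_after_one_step_general (N : ℕ) (hN : 0 < N) (η : ℝ) :
    (∫ φ₀ : ℝ, stdNormalPDF φ₀ *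
        ∫ ξ in Ioi (0 : ℝ), (condVar η ξ + condMean η φ₀ ξ ^ 2) * chiSqPDF N ξ)
      - (∫ φ₀ : ℝ, stdNormalPDF φ₀ *
          ∫ ξ in Ioi (0 : ℝ), condMean η φ₀ ξ * chiSqPDF N ξ) ^ 2
      = 1 + (N : ℝ) * η ^ 2 * (1 + 2 * η ^ 2) ^ (-(N : ℝ) / 2 - 2)
              * ((N : ℝ) + 1 - 2 * η ^ 2)
          - (N : ℝ) ^ 2 * η ^ 2 * (η ^ 2 + 1) ^ (-(N : ℝ) - 2) := by
  simp_rw [integral_condVar_add_condMean_sq_mul_chiSqPDF hN, integral_condMean_mul_chiSqPDF hN,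
    integral_stdNormalPDF_mul_quadratic, integral_stdNormalPDF_mul_affine]
  have hb : (1 + 2 * η ^ 2) ^ (-(N : ℝ) / 2 - 1) =
      (1 + 2 * η ^ 2) ^ (-(N : ℝ) / 2 - 2) * (1 + 2 * η ^ 2) := by
    rw [← rpow_add_one (by positivity)]; ring_nf
  have ha : ((η ^ 2 + 1) ^ (-(N : ℝ) / 2 - 1)) ^ 2 = (η ^ 2 + 1) ^ (-(N : ℝ) - 2) := by
    rw [← rpow_mul_natCast (by positivity)]; ring_nf
  rw [hb, neg_sq, mul_pow, ha]
  ring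

/-- With `Φ₀ ~ N(0,1)` and `Ξ₀² ~ χ²(N)` independent, and `Φ₁` conditionally
normal with mean `condMean` and variance `condVar`, the variance of `Φ₁`,
computed as `E[Φ₁²] - E[Φ₁]² = E[condVar + condMean²] - E[condMean]²`, equals
`1 + Nη²(1+2η²)^{-N/2-2}(N+1-2η²) - N²η²(η²+1)^{-N-2}`. -/
theorem variance_field_after_one_step (N : ℕ) (hN : 0 < N) (η : ℝ) (hη : 0 < η) :
    (∫ φ₀ : ℝ, stdNormalPDF φ₀ *
        ∫ ξ in Ioi (0 : ℝ), (condVar η ξ + condMean η φ₀ ξ ^ 2) * chiSqPDF N ξ)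
      - (∫ φ₀ : ℝ, stdNormalPDF φ₀ *
          ∫ ξ in Ioi (0 : ℝ), condMean η φ₀ ξ * chiSqPDF N ξ) ^ 2
      = 1 + (N : ℝ) * η ^ 2 * (1 + 2 * η ^ 2) ^ (-(N : ℝ) / 2 - 2)
              * ((N : ℝ) + 1 - 2 * η ^ 2)
          - (N : ℝ) ^ 2 * η ^ 2 * (η ^ 2 + 1) ^ (-(N : ℝ) - 2) :=
  variance_field_after_one_step_general N hN η
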